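/- arXiv:0710.3536 — 3 statements merged into one kernel-verified Lean document; each statement's English description precedes it below -/
import Mathlib

section
/- Suppose each property φ_i is monotonic. Then for every knowledge model for the initial game H, the restriction of H to the common knowledge event K*RAT(φ) is included (componentwise) in the outcome T_φ^∞; that is, G_{K*RAT(φ)} ⊆ T_φ^∞. -/
/-!
Epistemic analysis of arbitrary strategic games. The initial game `H` has
players `ι` and strategy sets `S i` (the full types). A restriction of `H` is a family `G : ∀ i, Set (S i)`,
ordered componentwise; this is a complete lattice with largest element `⊤ = H`.

Common knowledge of rationality is an evident event `E`: whoever is in `E` knows `E`, and,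
knowledge being truthful, whoever is in `E` is rational. Hence each strategy `s̄_i(ω)` with
`ω ∈ E` satisfies `φ_i` on `G_{P_i(ω)} ⊆ G_E`, so by monotonicity `G_E ⊆ T_φ(G_E)`. A
post-fixed point of a monotone operator lies below every transfinite iterate from `⊤`, in
particular below `T_φ^∞`.
-/

open Set

universe u

/-- The `o`-th transfinite iterate of `T`, starting from `⊤ = H`. -/
noncomputable def lfpIter {D : Type u} [CompleteLattice D] (T : D → D) (o : Ordinal.{u}) : D :=
  Ordinal.limitRecOn (motive := fun _ => D) o ⊤ (fun _ ih => T ih)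
    (fun o _ ih => ⨅ o' : {o' : Ordinal.{u} // o' < o}, ih o'.1 o'.2)

/-- The outcome `T^∞` of (iterating) `T`. -/
noncomputable def outcome {D : Type u} [CompleteLattice D] (T : D → D) : D :=
  lfpIter T (sInf {α : Ordinal.{u} | lfpIter T (α + 1) = lfpIter T α})

/-- The operator `T_φ` of iterated elimination of strategies that are not `φ_i`-optimal:
`T_φ(G)_i = {s_i ∈ G_i | φ_i(s_i, G)}`. -/
def Topr {ι : Type u} {S : ι → Type u} (φ : ∀ i, S i → (∀ j, Set (S j)) → Prop)
    (G : ∀ i, Set (S i)) : ∀ i, Set (S i) :=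
  fun i => {s | s ∈ G i ∧ φ i s G}

/-- `□E`: the event that every player believes the event `E`. -/
def box {ι Ω : Type u} (P : ι → Ω → Set Ω) (E : Set Ω) : Set Ω :=
  {ω | ∀ i, P i ω ⊆ E}

/-- `B*E`: the common belief event, `⋂_{k ≥ 1} □^k E`. -/
def commonBelief {ι Ω : Type u} (P : ι → Ω → Set Ω) (E : Set Ω) : Set Ω :=
  ⋂ k : ℕ, (box P)^[k + 1] E

/-- `G_E`: the restriction of the game to the event `E`, given by the images of `E`
under the strategy functions `s̄_i`. -/
def restrOf {ι Ω : Type u} {S : ι → Type u} (sb : ∀ i, Ω → S i) (E : Set Ω) :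
    ∀ i, Set (S i) := fun i => sb i '' E

/-- `RAT(φ)`: the event that each player `i` is `φ_i`-rational, i.e. that
`φ_i(s̄_i(ω), G_{P_i(ω)})` holds for every player `i`. -/
def RAT {ι Ω : Type u} {S : ι → Type u} (φ : ∀ i, S i → (∀ j, Set (S j)) → Prop)
    (sb : ∀ i, Ω → S i) (P : ι → Ω → Set Ω) : Set Ω :=
  {ω | ∀ i, φ i (sb i ω) (restrOf sb (P i ω))}

section Iteration

variable {D : Type u} [CompleteLattice D] {T : D → D}

theorem le_lfpIter_of_le_map (hT : Monotone T) {a : D} (ha : a ≤ T a) (o : Ordinal.{u}) :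
    a ≤ lfpIter T o := by
  induction o using Ordinal.limitRecOn with
  | zero => simp [lfpIter]
  | add_one o ih =>
    rw [lfpIter, Ordinal.limitRecOn_add_one]
    exact ha.trans (hT ih)
  | limit o ho ih =>
    rw [lfpIter, Ordinal.limitRecOn_limit _ _ _ _ ho]
    exact le_iInf fun o' => ih o'.1 o'.2

theorem le_outcome_of_le_map (hT : Monotone T) {a : D} (ha : a ≤ T a) : a ≤ outcome T :=
  le_lfpIter_of_le_map hT ha _

end Iteration

section Knowledge

variable {ι Ω : Type u} (P : ι → Ω → Set Ω)

theorem mem_of_mem_box (hrefl : ∀ i ω, ω ∈ P i ω) {E : Set Ω} {ω : Ω} (hω : ω ∈ box P E)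
    (i : ι) : ω ∈ E :=
  hω i (hrefl i ω)

theorem commonBelief_subset_box (E : Set Ω) : commonBelief P E ⊆ box P E := fun _ hω => by
  simpa using mem_iInter.mp hω 0

theorem commonBelief_subset_box_commonBelief (E : Set Ω) :
    commonBelief P E ⊆ box P (commonBelief P E) := by
  intro ω hω i ω' hω'
  refine mem_iInter.mpr fun k => ?_
  have hk := mem_iInter.mp hω (k + 1)
  rw [Function.iterate_succ_apply'] at hk
  exact hk i hω'

end Knowledge

section Restriction

variable {ι : Type u} {S : ι → Type u} {φ : ∀ i, S i → (∀ j, Set (S j)) → Prop}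

theorem Topr_monotone (hφ : ∀ i s, Monotone (φ i s)) : Monotone (Topr φ) :=
  fun _ _ hGG' i s hs => ⟨hGG' i hs.1, hφ i s hGG' hs.2⟩

theorem restrOf_le_Topr_restrOf {Ω : Type u} (hφ : ∀ i s, Monotone (φ i s))
    (sb : ∀ i, Ω → S i) (P : ι → Ω → Set Ω) (hrefl : ∀ i ω, ω ∈ P i ω) {E : Set Ω}
    (hE : E ⊆ box P E) (hRAT : E ⊆ box P (RAT φ sb P)) :
    restrOf sb E ≤ Topr φ (restrOf sb E) := by
  rintro i _ ⟨ω, hω, rfl⟩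
  have hrat : φ i (sb i ω) (restrOf sb (P i ω)) := mem_of_mem_box P hrefl (hRAT hω) i i
  exact ⟨⟨ω, hω, rfl⟩, hφ i _ (fun j => image_mono (hE hω i)) hrat⟩

end Restriction

theorem restr_commonKnowledge_RAT_le_outcome_general {ι : Type u} {S : ι → Type u}
    {Ω : Type u} (sb : ∀ i, Ω → S i) (P : ι → Ω → Set Ω)
    (hP3 : ∀ i ω, ω ∈ P i ω)
    (φ : ∀ i, S i → (∀ j, Set (S j)) → Prop)
    (hmono : ∀ i (s : S i) (G G' : ∀ j, Set (S j)), G ≤ G' → φ i s G → φ i s G') :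
    restrOf sb (commonBelief P (RAT φ sb P)) ≤ outcome (Topr φ) := by
  have hφ : ∀ i s, Monotone (φ i s) := fun i s G G' hGG' => hmono i s G G' hGG'
  exact le_outcome_of_le_map (Topr_monotone hφ) <|
    restrOf_le_Topr_restrOf hφ sb P hP3 (commonBelief_subset_box_commonBelief P _)
      (commonBelief_subset_box P _)

/-- if each `φ_i` is monotonic, then for every knowledge model
`(Ω, s̄, P)` for the initial game `H`, `G_{K*RAT(φ)} ⊆ T_φ^∞` (componentwise).
(Common knowledge `K*` is the common belief operator for knowledge correspondences.) -/
theorem restr_commonKnowledge_RAT_le_outcome {ι : Type u} {S : ι → Type u}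
    [∀ i, Nonempty (S i)] (p : ∀ i : ι, (∀ j, S j) → ℝ)
    {Ω : Type u} [Nonempty Ω] (sb : ∀ i, Ω → S i) (P : ι → Ω → Set Ω)
    (hP1 : ∀ i ω, (P i ω).Nonempty)
    (hP2 : ∀ i ω ω', ω' ∈ P i ω → P i ω' = P i ω)
    (hP3 : ∀ i ω, ω ∈ P i ω)
    (φ : ∀ i, S i → (∀ j, Set (S j)) → Prop)
    (hmono : ∀ i (s : S i) (G G' : ∀ j, Set (S j)), G ≤ G' → φ i s G → φ i s G') :
    restrOf sb (commonBelief P (RAT φ sb P)) ≤ outcome (Topr φ) :=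
  restr_commonKnowledge_RAT_le_outcome_general sb P hP3 φ hmono
end

section
/- For every belief model for the initial game H, G_{RAT(br^g) ∩ B*RAT(br^g)} ⊆ T_{sd^l}^∞, where br^g is the global best response property with beliefs being joint pure strategies of the opponents, and T_{sd^l}^∞ is the outcome of iterated elimination (possibly transfinite) of strategies strictly dominated by another strategy in the current restriction. -/
/-!
Epistemic analysis of arbitrary strategic games. The initial game `H` has
players `ι`, strategy sets `S i` (the full types, all nonempty) and payoff
functions `p i`. A restriction of `H` is a family `G : ∀ i, Set (S i)`,
ordered componentwise; this is a complete lattice with largest element `⊤ = H`.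
-/

open Set

universe u

/-- `s'` strictly dominates `s` on the restriction `G` (for player `i`):
`p_i(s', s_{-i}) > p_i(s, s_{-i})` for all `s_{-i} ∈ G_{-i}`. -/
def StrDom {ι : Type u} [DecidableEq ι] {S : ι → Type u}
    (p : ∀ i : ι, (∀ j, S j) → ℝ) (G : ∀ j, Set (S j)) (i : ι) (s' s : S i) : Prop :=
  ∀ t : ∀ j, S j, (∀ j, j ≠ i → t j ∈ G j) →
    p i (Function.update t i s) < p i (Function.update t i s')

/-- `sd^g_i(s, G)`: `s` is not strictly dominated on `G` by any strategy in `H_i`. -/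
def sdg {ι : Type u} [DecidableEq ι] {S : ι → Type u}
    (p : ∀ i : ι, (∀ j, S j) → ℝ) (i : ι) (s : S i) (G : ∀ j, Set (S j)) : Prop :=
  ¬ ∃ s' : S i, StrDom p G i s' s

/-- `sd^l_i(s, G)`: `s` is not strictly dominated on `G` by any strategy in `G_i`. -/
def sdl {ι : Type u} [DecidableEq ι] {S : ι → Type u}
    (p : ∀ i : ι, (∀ j, S j) → ℝ) (i : ι) (s : S i) (G : ∀ j, Set (S j)) : Prop :=
  ¬ ∃ s' ∈ G i, StrDom p G i s' s

/-- `br^g_i(s, G)`: `s` is a best response in `H_i` to some joint (pure) strategy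
of the opponents held in `G`. -/
def brg {ι : Type u} [DecidableEq ι] {S : ι → Type u}
    (p : ∀ i : ι, (∀ j, S j) → ℝ) (i : ι) (s : S i) (G : ∀ j, Set (S j)) : Prop :=
  ∃ t : ∀ j, S j, (∀ j, j ≠ i → t j ∈ G j) ∧
    ∀ s' : S i, p i (Function.update t i s') ≤ p i (Function.update t i s)

/-!
Every state of `E = RAT(br^g) ∩ B*RAT(br^g)` believes `E`, so a player's strategy at a
state of `E` is a best response to an opponent profile drawn from `G_E`. A best response
is never strictly dominated, so whenever `G_E ⊆ G` the restriction `G_E` also lies in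
`T_{sd^l}(G)`; it therefore survives every successor stage of the elimination, and
trivially every limit stage.
-/

section Iteration

variable {D : Type u} [CompleteLattice D] (T : D → D)

@[simp]
theorem lfpIter_zero : lfpIter T 0 = ⊤ := by
  simp [lfpIter]

@[simp]
theorem lfpIter_add_one (o : Ordinal.{u}) : lfpIter T (o + 1) = T (lfpIter T o) := by
  simp [lfpIter]

theorem lfpIter_of_isSuccLimit {o : Ordinal.{u}} (ho : Order.IsSuccLimit o) :
    lfpIter T o = ⨅ o' : {o' : Ordinal.{u} // o' < o}, lfpIter T o'.1 := by
  rw [lfpIter, Ordinal.limitRecOn_limit _ _ _ _ ho]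
  rfl

variable {T}

theorem le_lfpIter {X : D} (hX : ∀ G, X ≤ G → X ≤ T G) (o : Ordinal.{u}) :
    X ≤ lfpIter T o := by
  induction o using Ordinal.limitRecOn with
  | zero => simp
  | add_one o ih => simpa using hX _ ih
  | limit o ho ih =>
    rw [lfpIter_of_isSuccLimit T ho]
    exact le_iInf fun o' => ih o'.1 o'.2

theorem le_outcome {X : D} (hX : ∀ G, X ≤ G → X ≤ T G) : X ≤ outcome T :=
  le_lfpIter hX _

end Iteration

section Belief

variable {ι Ω : Type u} (P : ι → Ω → Set Ω)

theorem inter_commonBelief_subset_box (E : Set Ω) :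
    E ∩ commonBelief P E ⊆ box P (E ∩ commonBelief P E) := by
  rintro ω ⟨-, hω⟩ i ω' hω'
  refine ⟨?_, mem_iInter.2 fun k => ?_⟩
  · exact mem_iInter.1 hω 0 i hω'
  · have hk := mem_iInter.1 hω (k + 1)
    rw [Function.iterate_succ_apply'] at hk
    exact hk i hω'

variable {S : ι → Type u} {sb : ∀ i, Ω → S i}

theorem restrOf_mono {E F : Set Ω} (h : E ⊆ F) : restrOf sb E ≤ restrOf sb F :=
  fun _ => image_mono h

theorem restrOf_le_Topr {φ ψ : ∀ i, S i → (∀ j, Set (S j)) → Prop}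
    (hφψ : ∀ i s G G', G ≤ G' → φ i s G → ψ i s G') {E : Set Ω}
    (hRAT : E ⊆ RAT φ sb P) (hbox : E ⊆ box P E) {G : ∀ i, Set (S i)}
    (hG : restrOf sb E ≤ G) : restrOf sb E ≤ Topr ψ G := by
  rintro i _ ⟨ω, hω, rfl⟩
  have hbelief : restrOf sb (P i ω) ≤ G := (restrOf_mono (hbox hω i)).trans hG
  exact ⟨hG i (mem_image_of_mem _ hω), hφψ i _ _ _ hbelief (hRAT hω i)⟩

end Belief

section Dominance

variable {ι : Type u} [DecidableEq ι] {S : ι → Type u} {p : ι → (∀ j, S j) → ℝ}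
  {i : ι} {s : S i} {G G' : ∀ j, Set (S j)}

theorem brg.mono (h : brg p i s G) (hGG' : G ≤ G') : brg p i s G' :=
  let ⟨t, ht, hbest⟩ := h
  ⟨t, fun j hj => hGG' j (ht j hj), hbest⟩

theorem brg.sdg (h : brg p i s G) : sdg p i s G := by
  rintro ⟨s', hdom⟩
  obtain ⟨t, ht, hbest⟩ := h
  exact (hbest s').not_gt (hdom t ht)

theorem sdg.sdl (h : sdg p i s G) : sdl p i s G :=
  fun ⟨s', _, hdom⟩ => h ⟨s', hdom⟩

end Dominance

theorem restr_RAT_brg_inter_commonBelief_le_outcome_sdl_general {ι : Type u} [DecidableEq ι]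
    {S : ι → Type u} (p : ∀ i : ι, (∀ j, S j) → ℝ)
    {Ω : Type u} (sb : ∀ i, Ω → S i) (P : ι → Ω → Set Ω) :
    restrOf sb (RAT (brg p) sb P ∩ commonBelief P (RAT (brg p) sb P))
      ≤ outcome (Topr (sdl p)) :=
  le_outcome fun _ =>
    restrOf_le_Topr P (fun _ _ _ _ hGG' h => (h.mono hGG').sdg.sdl)
      inter_subset_left (inter_commonBelief_subset_box P _)

/-- for every belief model for the initial game `H`,
`G_{RAT(br^g) ∩ B*RAT(br^g)} ⊆ T_{sd^l}^∞`, where `br^g` is the global best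
response property (beliefs being joint pure strategies of the opponents) and
`T_{sd^l}^∞` is the outcome of the (possibly transfinite) iterated elimination
of strategies strictly dominated by another strategy in the current restriction. -/
theorem restr_RAT_brg_inter_commonBelief_le_outcome_sdl {ι : Type u} [DecidableEq ι]
    {S : ι → Type u} [∀ i, Nonempty (S i)] (p : ∀ i : ι, (∀ j, S j) → ℝ)
    {Ω : Type u} [Nonempty Ω] (sb : ∀ i, Ω → S i) (P : ι → Ω → Set Ω)
    (hP1 : ∀ i ω, (P i ω).Nonempty)
    (hP2 : ∀ i ω ω', ω' ∈ P i ω → P i ω' = P i ω) :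
    restrOf sb (RAT (brg p) sb P ∩ commonBelief P (RAT (brg p) sb P))
      ≤ outcome (Topr (sdl p)) :=
  restr_RAT_brg_inter_commonBelief_le_outcome_sdl_general p sb P
end

section
/- Assume the initial game H is finite. For every belief model for H, G_{RAT(br^g) ∩ B*RAT(br^g)} ⊆ T_{msd^l}^∞, where br^g is the global best response property with beliefs being joint mixed strategies of the opponents, and T_{msd^l}^∞ is the outcome of iterated elimination of strategies strictly dominated by a mixed strategy over the current restriction. -/
/-!
Epistemic analysis of arbitrary strategic games. The initial game `H` has
players `ι`, strategy sets `S i` (the full types, all nonempty) and payoff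
functions `p i`. A restriction of `H` is a family `G : ∀ i, Set (S i)`,
ordered componentwise; this is a complete lattice with largest element `⊤ = H`.
-/

open Set

universe u

/-- `m` is a probability distribution over the subset `A` of player strategies:
nonnegative, sums to `1`, and supported in `A`. -/
def IsDistOn {α : Type u} [Fintype α] (A : Set α) (m : α → ℝ) : Prop :=
  (∀ s, 0 ≤ m s) ∧ (∑ s, m s = 1) ∧ ∀ s, m s ≠ 0 → s ∈ A

/-- The full strategy profile obtained from player `i`'s strategy `si` and a joint
strategy `t` of his opponents. -/
def extProf {ι : Type u} [DecidableEq ι] {S : ι → Type u} (i : ι) (si : S i)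
    (t : ∀ j : {j : ι // j ≠ i}, S j.1) : ∀ j, S j :=
  fun j => if h : j = i then cast (congrArg S h.symm) si else t ⟨j, h⟩

/-- Expected payoff `p_i(si, μ)` of player `i` playing `si` against the joint mixed
strategy `μ = (m_j)_{j ≠ i}` of his opponents (entry `i` of `μ` is ignored):
`Σ_{s_{-i}} (Π_{j ≠ i} m_j(s_j)) p_i(si, s_{-i})`. -/
def jointMixedPayoff {ι : Type u} [Fintype ι] [DecidableEq ι] {S : ι → Type u}
    [∀ i, Fintype (S i)] (p : ∀ i : ι, (∀ j, S j) → ℝ) (i : ι) (si : S i)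
    (μ : ∀ j, S j → ℝ) : ℝ :=
  ∑ t : ∀ j : {j : ι // j ≠ i}, S j.1,
    (∏ j : {j : ι // j ≠ i}, μ j.1 (t j)) * p i (extProf i si t)

/-- `br^g_i(s, G)` with mixed beliefs: `s` is a best response in `H_i` to some joint
mixed strategy `μ = (m_j)_{j ≠ i}` of the opponents with `m_j ∈ Δ G_j`. -/
def brgMixed {ι : Type u} [Fintype ι] [DecidableEq ι] {S : ι → Type u}
    [∀ i, Fintype (S i)] (p : ∀ i : ι, (∀ j, S j) → ℝ) (i : ι) (s : S i)
    (G : ∀ j, Set (S j)) : Prop :=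
  ∃ μ : ∀ j, S j → ℝ, (∀ j, j ≠ i → IsDistOn (G j) (μ j)) ∧
    ∀ s' : S i, jointMixedPayoff p i s' μ ≤ jointMixedPayoff p i s μ

/-- Expected payoff of the mixed strategy `m` of player `i` against the joint
strategy of the opponents given by the profile `t` (entry `i` of `t` is ignored). -/
def mixedPayoff {ι : Type u} [Fintype ι] [DecidableEq ι] {S : ι → Type u}
    [∀ i, Fintype (S i)] (p : ∀ i : ι, (∀ j, S j) → ℝ) (i : ι) (m : S i → ℝ)
    (t : ∀ j, S j) : ℝ :=
  ∑ s : S i, m s * p i (Function.update t i s)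

/-- `msd^l_i(s, G)`: `s` is not strictly dominated on `G` by any mixed strategy in
`Δ G_i` (a distribution over the current restriction). -/
def msdl {ι : Type u} [Fintype ι] [DecidableEq ι] {S : ι → Type u}
    [∀ i, Fintype (S i)] (p : ∀ i : ι, (∀ j, S j) → ℝ) (i : ι) (s : S i)
    (G : ∀ j, Set (S j)) : Prop :=
  ¬ ∃ m : S i → ℝ, IsDistOn (G i) m ∧
    ∀ t : ∀ j, S j, (∀ j, j ≠ i → t j ∈ G j) →
      p i (Function.update t i s) < mixedPayoff p i m t

/-!
A strategy that is a best response to some belief over the opponents' strategies in `G` cannot be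
strictly dominated on any larger restriction `G'`: the dominating mixed strategy would do strictly
better against that very belief. Common belief in rationality makes the restriction `G_E` of the
event `E = RAT ∩ B*RAT` closed under the beliefs of every `ω ∈ E`, so every rational strategy in
`G_E` is a best response to a belief held in `G_E`. Hence `G_E ≤ G` implies `G_E ≤ T_{msd^l}(G)`,
and transfinite induction carries `G_E` through every stage of the elimination.
-/

section Iteration

variable {D : Type u} [CompleteLattice D] (T : D → D)

theorem le_lfpIter_of_le_imp_le {x : D} (hT : ∀ y, x ≤ y → x ≤ T y) (α : Ordinal.{u}) :
    x ≤ lfpIter T α := by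
  induction α using Ordinal.limitRecOn with
  | zero => rw [lfpIter, Ordinal.limitRecOn_zero]; exact le_top
  | add_one β ih => rw [lfpIter, Ordinal.limitRecOn_add_one]; exact hT _ ih
  | limit α hlim ih =>
    rw [lfpIter, Ordinal.limitRecOn_limit _ _ _ _ hlim]
    exact le_iInf fun o => ih o.1 o.2

theorem le_outcome_of_le_imp_le {x : D} (hT : ∀ y, x ≤ y → x ≤ T y) : x ≤ outcome T :=
  le_lfpIter_of_le_imp_le T hT _

end Iteration

section CommonBelief

variable {ι Ω : Type u} (P : ι → Ω → Set Ω) (E : Set Ω)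

theorem commonBelief_subset_box_inter : commonBelief P E ⊆ box P (E ∩ commonBelief P E) := by
  intro ω hω i ω' hω'
  have hbox : ∀ k : ℕ, ω ∈ box P ((box P)^[k] E) := fun k => by
    simpa only [Function.iterate_succ_apply'] using mem_iInter.1 hω k
  exact ⟨hbox 0 i hω', mem_iInter.2 fun k => hbox (k + 1) i hω'⟩

end CommonBelief

section Dominance

variable {ι : Type u} [DecidableEq ι] {S : ι → Type u} {i : ι}

theorem extProf_of_ne (si : S i) (t : ∀ j : {j : ι // j ≠ i}, S j.1) {j : ι} (hj : j ≠ i) :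
    extProf i si t j = t ⟨j, hj⟩ := by
  simp [extProf, hj]

theorem update_extProf (si s' : S i) (t : ∀ j : {j : ι // j ≠ i}, S j.1) :
    Function.update (extProf i si t) i s' = extProf i s' t := by
  funext j
  rcases eq_or_ne j i with rfl | hj
  · simp [extProf]
  · rw [Function.update_of_ne hj, extProf_of_ne _ _ hj, extProf_of_ne _ _ hj]

variable [Fintype ι] [∀ i, Fintype (S i)] (p : ∀ i : ι, (∀ j, S j) → ℝ)

def oppWeight (i : ι) (μ : ∀ j, S j → ℝ) (t : ∀ j : {j : ι // j ≠ i}, S j.1) : ℝ :=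
  ∏ j, μ j.1 (t j)

variable {G : ∀ j, Set (S j)} {μ : ∀ j, S j → ℝ}

theorem oppWeight_nonneg (hμ : ∀ j, j ≠ i → IsDistOn (G j) (μ j)) (t) : 0 ≤ oppWeight i μ t :=
  Finset.prod_nonneg fun j _ => (hμ j.1 j.2).1 _

theorem sum_oppWeight (hμ : ∀ j, j ≠ i → IsDistOn (G j) (μ j)) : ∑ t, oppWeight i μ t = 1 := by
  simp only [oppWeight, ← Fintype.prod_sum, fun j : {j : ι // j ≠ i} => (hμ j.1 j.2).2.1,
    Finset.prod_const_one]

theorem extProf_mem_of_oppWeight_ne_zero (hμ : ∀ j, j ≠ i → IsDistOn (G j) (μ j)) (si : S i)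
    {t} (ht : oppWeight i μ t ≠ 0) (j : ι) (hj : j ≠ i) : extProf i si t j ∈ G j := by
  rw [extProf_of_ne _ _ hj]
  exact (hμ j hj).2.2 _ (Finset.prod_ne_zero_iff.1 ht ⟨j, hj⟩ (Finset.mem_univ _))

theorem sum_mul_jointMixedPayoff (m : S i → ℝ) (si : S i) :
    ∑ s', m s' * jointMixedPayoff p i s' μ
      = ∑ t, oppWeight i μ t * mixedPayoff p i m (extProf i si t) := by
  simp only [jointMixedPayoff, mixedPayoff, update_extProf, Finset.mul_sum]
  rw [Finset.sum_comm]
  refine Finset.sum_congr rfl fun t _ => Finset.sum_congr rfl fun s' _ => ?_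
  rw [oppWeight]
  ring

theorem jointMixedPayoff_lt_of_dominated (hμ : ∀ j, j ≠ i → IsDistOn (G j) (μ j))
    {s : S i} {m : S i → ℝ}
    (hdom : ∀ t : ∀ j, S j, (∀ j, j ≠ i → t j ∈ G j) →
      p i (Function.update t i s) < mixedPayoff p i m t) :
    jointMixedPayoff p i s μ < ∑ s', m s' * jointMixedPayoff p i s' μ := by
  have hpt : ∀ t, oppWeight i μ t ≠ 0 →
      p i (extProf i s t) < mixedPayoff p i m (extProf i s t) := fun t ht => by
    simpa only [update_extProf, Function.update_eq_self] using
      hdom _ (extProf_mem_of_oppWeight_ne_zero hμ s ht)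
  obtain ⟨t₀, ht₀⟩ : ∃ t, oppWeight i μ t ≠ 0 := by
    by_contra! h
    exact one_ne_zero ((sum_oppWeight hμ).symm.trans (Finset.sum_eq_zero fun t _ => h t))
  change ∑ t, oppWeight i μ t * p i (extProf i s t) < _
  rw [sum_mul_jointMixedPayoff p m s]
  refine Finset.sum_lt_sum (fun t _ => ?_) ⟨t₀, Finset.mem_univ _, ?_⟩
  · rcases eq_or_ne (oppWeight i μ t) 0 with ht | ht
    · rw [ht, zero_mul, zero_mul]
    · exact mul_le_mul_of_nonneg_left (hpt t ht).le (oppWeight_nonneg hμ t)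
  · exact mul_lt_mul_of_pos_left (hpt t₀ ht₀) ((oppWeight_nonneg hμ t₀).lt_of_ne' ht₀)

theorem msdl_of_brgMixed {s : S i} (hbr : brgMixed p i s G) : msdl p i s G := by
  obtain ⟨μ, hμ, hbest⟩ := hbr
  rintro ⟨m, ⟨hm0, hm1, -⟩, hdom⟩
  have hmix_le : ∑ s', m s' * jointMixedPayoff p i s' μ ≤ jointMixedPayoff p i s μ :=
    calc ∑ s', m s' * jointMixedPayoff p i s' μ
        ≤ ∑ s', m s' * jointMixedPayoff p i s μ :=
          Finset.sum_le_sum fun s' _ => mul_le_mul_of_nonneg_left (hbest s') (hm0 s')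
      _ = jointMixedPayoff p i s μ := by rw [← Finset.sum_mul, hm1, one_mul]
  exact (jointMixedPayoff_lt_of_dominated p hμ hdom).not_ge hmix_le

theorem brgMixed_mono {s : S i} {G' : ∀ j, Set (S j)} (hbr : brgMixed p i s G) (hG : G ≤ G') :
    brgMixed p i s G' := by
  obtain ⟨μ, hμ, hbest⟩ := hbr
  exact ⟨μ, fun j hj => ⟨(hμ j hj).1, (hμ j hj).2.1, fun x hx => hG j ((hμ j hj).2.2 x hx)⟩, hbest⟩

end Dominance

theorem restr_RAT_brgMixed_inter_commonBelief_le_outcome_msdl_general {ι : Type u}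
    [Fintype ι] [DecidableEq ι] {S : ι → Type u} [∀ i, Fintype (S i)]
    (p : ∀ i : ι, (∀ j, S j) → ℝ)
    {Ω : Type u} (sb : ∀ i, Ω → S i) (P : ι → Ω → Set Ω) :
    restrOf sb (RAT (brgMixed p) sb P ∩ commonBelief P (RAT (brgMixed p) sb P))
      ≤ outcome (Topr (msdl p)) := by
  refine le_outcome_of_le_imp_le _ fun G hG i _ ⟨ω, hω, hs⟩ => ?_
  subst hs
  have hbeliefs : restrOf sb (P i ω) ≤ G := fun j =>
    (image_mono (commonBelief_subset_box_inter P _ hω.2 i)).trans (hG j)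
  exact ⟨hG i ⟨ω, hω, rfl⟩, msdl_of_brgMixed p (brgMixed_mono p (hω.1 i) hbeliefs)⟩

/-- assume the initial game `H` is finite. For every belief model
for `H`, `G_{RAT(br^g) ∩ B*RAT(br^g)} ⊆ T_{msd^l}^∞`, where `br^g` is the global
best response property with beliefs being joint mixed strategies of the opponents,
and `T_{msd^l}^∞` is the outcome of iterated elimination of strategies strictly
dominated by a mixed strategy over the current restriction. -/
theorem restr_RAT_brgMixed_inter_commonBelief_le_outcome_msdl {ι : Type u}
    [Fintype ι] [DecidableEq ι] {S : ι → Type u} [∀ i, Fintype (S i)]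
    [∀ i, Nonempty (S i)] (p : ∀ i : ι, (∀ j, S j) → ℝ)
    {Ω : Type u} [Nonempty Ω] (sb : ∀ i, Ω → S i) (P : ι → Ω → Set Ω)
    (hP1 : ∀ i ω, (P i ω).Nonempty)
    (hP2 : ∀ i ω ω', ω' ∈ P i ω → P i ω' = P i ω) :
    restrOf sb (RAT (brgMixed p) sb P ∩ commonBelief P (RAT (brgMixed p) sb P))
      ≤ outcome (Topr (msdl p)) :=
  restr_RAT_brgMixed_inter_commonBelief_le_outcome_msdl_general p sb P
end
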